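/- Let f : F₂' → ℤ be a signed-area homomorphism. Then for all a, b ∈ F₂, f([a,b]) = exp_x(a)·exp_y(b) − exp_y(a)·exp_x(b). (The signed area of a commutator [a,b] equals the determinant of the pair of exponent vectors of a and b.) -/

import Mathlib

/-- The total exponent of `x` in a word of the free group on `{x, y}`. -/
def expx (w : FreeGroup (Fin 2)) : ℤ :=
  Multiplicative.toAdd
    (FreeGroup.lift (fun i => Multiplicative.ofAdd (if i = 0 then (1 : ℤ) else 0)) w)

/-- The total exponent of `y` in a word of the free group on `{x, y}`. -/
def expy (w : FreeGroup (Fin 2)) : ℤ :=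
  Multiplicative.toAdd
    (FreeGroup.lift (fun i => Multiplicative.ofAdd (if i = 1 then (1 : ℤ) else 0)) w)

open scoped commutatorElement

/-!
Write `c_u(a, b)` for the conjugate `u ⁅a, b⁆ u⁻¹`. The identities
`c_u(a a', b) = c_{ua}(a', b) · c_u(a, b)`, `c_u(a⁻¹, b) = c_{ua⁻¹}(a, b)⁻¹` and
`c_u(b, a) = c_u(a, b)⁻¹` let an identity `f (c_u(a, b)) = φ a b`, with `φ` bimultiplicative,
propagate by induction from generators of `F₂` to all `a, b`, provided it is asserted for every
conjugator `u` at once: this is what makes the induction close without knowing in advance that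
`f` is conjugation invariant. On generators both `f` and the determinant of exponent vectors
are fixed by their value `1` on `c_u(x, y)`.
-/

section ConjCommutator

variable {G : Type*} [Group G]

def conjCommutator (u a b : G) : commutator G :=
  ⟨u * ⁅a, b⁆ * u⁻¹, Subgroup.Normal.conj_mem inferInstance _
    (Subgroup.commutator_mem_commutator (Subgroup.mem_top a) (Subgroup.mem_top b)) u⟩

@[simp]
lemma coe_conjCommutator (u a b : G) : (conjCommutator u a b : G) = u * ⁅a, b⁆ * u⁻¹ := rfl

@[simp]
lemma conjCommutator_one_left (u b : G) : conjCommutator u 1 b = 1 := by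
  ext; simp

lemma conjCommutator_mul_left (u a a' b : G) :
    conjCommutator u (a * a') b = conjCommutator (u * a) a' b * conjCommutator u a b := by
  ext; simp only [coe_conjCommutator, Subgroup.coe_mul, commutatorElement_def]; group

lemma conjCommutator_inv_left (u a b : G) :
    conjCommutator u a⁻¹ b = (conjCommutator (u * a⁻¹) a b)⁻¹ := by
  ext; simp only [coe_conjCommutator, Subgroup.coe_inv, commutatorElement_def]; group

lemma conjCommutator_swap (u a b : G) :
    conjCommutator u b a = (conjCommutator u a b)⁻¹ := by
  ext; simp only [coe_conjCommutator, Subgroup.coe_inv, commutatorElement_def]; group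

@[simp]
lemma conjCommutator_self (u a : G) : conjCommutator u a a = 1 := by
  ext; simp

end ConjCommutator

section FreeGroup

variable {α A : Type*} [CommGroup A] {f : commutator (FreeGroup α) →* A}

lemma map_conjCommutator_eq_of_forall_of_left {b : FreeGroup α} {φ : FreeGroup α →* A}
    (h : ∀ i u, f (conjCommutator u (.of i) b) = φ (.of i)) (a u : FreeGroup α) :
    f (conjCommutator u a b) = φ a := by
  induction a using FreeGroup.induction_on generalizing u with
  | C1 => simp
  | of i => exact h i u
  | inv_of i ih => rw [conjCommutator_inv_left, map_inv, ih, map_inv]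
  | mul a a' ih ih' => rw [conjCommutator_mul_left, map_mul, ih, ih', map_mul, mul_comm]

lemma map_conjCommutator_eq_of_forall_of (φ : FreeGroup α →* FreeGroup α →* A)
    (h : ∀ i j u, f (conjCommutator u (.of i) (.of j)) = φ (.of i) (.of j))
    (a b u : FreeGroup α) : f (conjCommutator u a b) = φ a b := by
  have of_right (j : α) (a u : FreeGroup α) :
      f (conjCommutator u a (.of j)) = φ a (.of j) :=
    map_conjCommutator_eq_of_forall_of_left (φ := φ.flip (.of j)) (h · j) a u
  have := map_conjCommutator_eq_of_forall_of_left (f := f) (b := a) (φ := (φ a)⁻¹)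
    (fun j u => by rw [conjCommutator_swap, map_inv, of_right, MonoidHom.inv_apply]) b u
  rwa [conjCommutator_swap, map_inv, MonoidHom.inv_apply, inv_inj] at this

end FreeGroup

section ExponentDeterminant

lemma expx_mul (a b : FreeGroup (Fin 2)) : expx (a * b) = expx a + expx b := by simp [expx]

lemma expy_mul (a b : FreeGroup (Fin 2)) : expy (a * b) = expy a + expy b := by simp [expy]

def expDet : FreeGroup (Fin 2) →* FreeGroup (Fin 2) →* Multiplicative ℤ :=
  MonoidHom.mk'
    (fun a => MonoidHom.mk' (fun b => .ofAdd (expx a * expy b - expy a * expx b)) fun b b' => by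
      rw [← ofAdd_add, expx_mul, expy_mul]; exact congrArg _ (by ring))
    fun a a' => MonoidHom.ext fun b => by
      simp only [MonoidHom.mul_apply, MonoidHom.mk'_apply]
      rw [← ofAdd_add, expx_mul, expy_mul]
      exact congrArg _ (by ring)

lemma expDet_apply (a b : FreeGroup (Fin 2)) :
    expDet a b = .ofAdd (expx a * expy b - expy a * expx b) := rfl

end ExponentDeterminant

theorem stmt_6
    (f : ↥(commutator (FreeGroup (Fin 2))) →* Multiplicative ℤ)
    (hf : ∀ (u : FreeGroup (Fin 2)) (w : ↥(commutator (FreeGroup (Fin 2)))),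
      (w : FreeGroup (Fin 2)) =
          u * ⁅FreeGroup.of (0 : Fin 2), FreeGroup.of (1 : Fin 2)⁆ * u⁻¹ →
      f w = Multiplicative.ofAdd (1 : ℤ))
    (a b : FreeGroup (Fin 2)) (w : ↥(commutator (FreeGroup (Fin 2))))
    (hw : (w : FreeGroup (Fin 2)) = ⁅a, b⁆) :
    Multiplicative.toAdd (f w) = expx a * expy b - expy a * expx b := by
  have hxy (u : FreeGroup (Fin 2)) : f (conjCommutator u (.of 0) (.of 1)) = .ofAdd 1 :=
    hf u _ rfl
  have on_generators : ∀ i j u, f (conjCommutator u (.of i) (.of j)) = expDet (.of i) (.of j) := by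
    simp only [Fin.forall_fin_two, expDet_apply, expx, expy]
    refine ⟨⟨fun u => by simp, fun u => by simp [hxy]⟩, fun u => ?_, fun u => by simp⟩
    rw [conjCommutator_swap, map_inv, hxy]
    simp
  have hw' : w = conjCommutator 1 a b := by ext; simp [hw]
  rw [hw', map_conjCommutator_eq_of_forall_of expDet on_generators, expDet_apply, toAdd_ofAdd]
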